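/- arXiv:2510.11862 — 4 statements merged into one kernel-verified Lean document; each statement's English description precedes it below -/
import Mathlib

section
/- Let ℓ, k be positive integers, n = ℓ + k, and for an ℓ×k complex matrix X let N_X denote the n×n block matrix (0 X; 0 0) (top-left ℓ×ℓ block zero, top-right block X, bottom blocks zero, with rows and columns indexed by Fin ℓ ⊕ Fin k). For ℓ×k complex matrices X and Y, the matrices N_X and N_Y are conjugate in GL(n,ℂ) (i.e. there exists an invertible n×n matrix P with N_Y = P * N_X * P⁻¹) if and only if rank X = rank Y. In other words, each nilpotent GL(n,ℂ)-conjugacy class meets the block space in exactly one GL(ℓ,ℂ)×GL(k,ℂ)-orbit. -/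
open Matrix

/-! Conjugation preserves rank and `rank (0 X; 0 0) = rank X`, which gives one direction.
Conversely, matrices of equal rank are equivalent, `Y = A X B` with `A`, `B` invertible, and
conjugation by `diag(A, B⁻¹)` carries `(0 X; 0 0)` to `(0 Y; 0 0)`. Equivalence of equal-rank
matrices is the statement that linear maps `f, g : V → W` of equal rank satisfy `g = e₂ f e₁`
for automorphisms `e₁`, `e₂`: first move `range f` onto `range g` by an automorphism of `W`;
maps with the same range then differ by an automorphism of `V` matching the kernels and
kernel complements. -/

namespace LinearEquiv

variable {R V V' : Type*} [Ring R] [AddCommGroup V] [Module R V] [AddCommGroup V'] [Module R V']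
  {p q : Submodule R V} {p' q' : Submodule R V'}

noncomputable def ofIsCompl (h : IsCompl p q) (h' : IsCompl p' q') (φ : p ≃ₗ[R] p')
    (ψ : q ≃ₗ[R] q') : V ≃ₗ[R] V' :=
  (p.prodEquivOfIsCompl q h).symm ≪≫ₗ φ.prodCongr ψ ≪≫ₗ p'.prodEquivOfIsCompl q' h'

variable (h : IsCompl p q) (h' : IsCompl p' q') (φ : p ≃ₗ[R] p') (ψ : q ≃ₗ[R] q')

@[simp]
theorem ofIsCompl_apply_left (x : p) : ofIsCompl h h' φ ψ x = φ x := by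
  simp [ofIsCompl]

@[simp]
theorem ofIsCompl_apply_right (x : q) : ofIsCompl h h' φ ψ x = ψ x := by
  simp [ofIsCompl]

theorem map_ofIsCompl_left : p.map (ofIsCompl h h' φ ψ : V →ₗ[R] V') = p' := by
  ext y
  constructor
  · rintro ⟨x, hx, rfl⟩
    exact (ofIsCompl_apply_left h h' φ ψ ⟨x, hx⟩) ▸ (φ _).2
  · intro hy
    exact ⟨φ.symm ⟨y, hy⟩, (φ.symm _).2, by simp⟩

end LinearEquiv

section DivisionRing

variable {K V W : Type*} [DivisionRing K] [AddCommGroup V] [Module K V] [FiniteDimensional K V]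
  [AddCommGroup W] [Module K W]

theorem Submodule.exists_linearEquiv_map_eq {p p' : Submodule K V}
    (h : Module.finrank K p = Module.finrank K p') :
    ∃ e : V ≃ₗ[K] V, p.map (e : V →ₗ[K] V) = p' := by
  obtain ⟨q, hq⟩ := p.exists_isCompl
  obtain ⟨q', hq'⟩ := p'.exists_isCompl
  have hfinrank : Module.finrank K q = Module.finrank K q' := by
    have := Submodule.finrank_add_eq_of_isCompl hq
    have := Submodule.finrank_add_eq_of_isCompl hq'
    omega
  exact ⟨_, LinearEquiv.map_ofIsCompl_left hq hq' (.ofFinrankEq _ _ h) (.ofFinrankEq _ _ hfinrank)⟩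

theorem LinearMap.exists_linearEquiv_eq_comp_of_range_eq {f g : V →ₗ[K] W}
    (h : range f = range g) : ∃ e : V ≃ₗ[K] V, f = g ∘ₗ e := by
  obtain ⟨C, hC⟩ := (ker f).exists_isCompl
  obtain ⟨C', hC'⟩ := (ker g).exists_isCompl
  have hker : Module.finrank K (ker f) = Module.finrank K (ker g) := by
    have := f.finrank_range_add_finrank_ker
    have := g.finrank_range_add_finrank_ker
    rw [h] at *
    omega
  let κ : ker f ≃ₗ[K] ker g := .ofFinrankEq _ _ hker
  let σ : C ≃ₗ[K] C' := f.kerComplementEquivRange hC.symm ≪≫ₗ .ofEq _ _ h ≪≫ₗ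
    (g.kerComplementEquivRange hC'.symm).symm
  have hσ (c : C) : g (σ c) = f c :=
    congrArg Subtype.val ((g.kerComplementEquivRange hC'.symm).apply_symm_apply _)
  refine ⟨.ofIsCompl hC hC' κ σ, LinearMap.ext_on_codisjoint hC.codisjoint
    (fun x hx => ?_) (fun c hc => ?_)⟩
  · have hκ := LinearEquiv.ofIsCompl_apply_left hC hC' κ σ ⟨x, hx⟩
    simp only [comp_apply, LinearEquiv.coe_coe] at hκ ⊢
    rw [hκ, LinearMap.mem_ker.mp hx, LinearMap.mem_ker.mp (κ _).2]
  · have := LinearEquiv.ofIsCompl_apply_right hC hC' κ σ ⟨c, hc⟩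
    simp only [comp_apply, LinearEquiv.coe_coe] at this ⊢
    rw [this, hσ]

theorem LinearMap.exists_linearEquiv_eq_comp_comp_of_finrank_range_eq [FiniteDimensional K W]
    {f g : V →ₗ[K] W} (h : Module.finrank K (range f) = Module.finrank K (range g)) :
    ∃ (e₁ : V ≃ₗ[K] V) (e₂ : W ≃ₗ[K] W), g = e₂ ∘ₗ f ∘ₗ e₁ := by
  obtain ⟨e₂, he₂⟩ := Submodule.exists_linearEquiv_map_eq h
  obtain ⟨e₁, he₁⟩ := exists_linearEquiv_eq_comp_of_range_eq
    (f := g) (g := e₂ ∘ₗ f) (by rw [range_comp, he₂])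
  exact ⟨e₁, e₂, he₁⟩

end DivisionRing

namespace Matrix

theorem GeneralLinearGroup.mulVecLin_toLin_symm {R n : Type*} [CommRing R] [Fintype n]
    [DecidableEq n] (u : LinearMap.GeneralLinearGroup R (n → R)) :
    mulVecLin (toLin.symm u : Matrix n n R) = u := by
  rw [← coe_toLin, MulEquiv.apply_symm_apply]

theorem exists_mul_mul_eq_of_rank_eq {K m n : Type*} [Field K] [Fintype m] [Fintype n]
    [DecidableEq m] [DecidableEq n] {X Y : Matrix m n K} (h : X.rank = Y.rank) :
    ∃ (A : GL m K) (B : GL n K), Y = (A : Matrix m m K) * X * (B : Matrix n n K) := by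
  obtain ⟨e₁, e₂, he⟩ := LinearMap.exists_linearEquiv_eq_comp_comp_of_finrank_range_eq h
  refine ⟨GeneralLinearGroup.toLin.symm (.ofLinearEquiv e₂),
    GeneralLinearGroup.toLin.symm (.ofLinearEquiv e₁), toLin'.injective ?_⟩
  simp only [toLin'_apply', mulVecLin_mul, GeneralLinearGroup.mulVecLin_toLin_symm]
  exact he

theorem rank_mul_mul_of_isUnit {R m n : Type*} [CommRing R] [Fintype m] [Fintype n]
    [DecidableEq m] [DecidableEq n] {A : Matrix m m R} {B : Matrix n n R} (hA : IsUnit A)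
    (hB : IsUnit B) (M : Matrix m n R) : (A * M * B).rank = M.rank := by
  rw [rank_mul_eq_left_of_isUnit_det _ _ ((isUnit_iff_isUnit_det B).mp hB),
    rank_mul_eq_right_of_isUnit_det _ _ ((isUnit_iff_isUnit_det A).mp hA)]

theorem rank_fromBlocks_zero₁₁_zero₂₁_zero₂₂ {R m n : Type*} [CommSemiring R]
    [StrongRankCondition R] [Fintype m] [Fintype n] [DecidableEq m] [DecidableEq n]
    (X : Matrix m n R) : (fromBlocks 0 X 0 0 : Matrix (m ⊕ n) (m ⊕ n) R).rank = X.rank := by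
  refine le_antisymm ?_ ?_
  · have hfactor : (fromBlocks 0 X 0 0 : Matrix (m ⊕ n) (m ⊕ n) R) =
        fromRows (1 : Matrix m m R) 0 * X * fromCols (0 : Matrix n m R) 1 := by
      rw [fromRows_mul, Matrix.one_mul, Matrix.zero_mul, fromRows_mul_fromCols]
      simp only [Matrix.mul_zero, Matrix.mul_one]
    rw [hfactor]
    exact (rank_mul_le_left _ _).trans (rank_mul_le_right _ _)
  · have hsub : (fromBlocks 0 X 0 0 : Matrix (m ⊕ n) (m ⊕ n) R).submatrix Sum.inl Sum.inr = X :=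
      rfl
    exact hsub ▸ rank_submatrix_le _ _ _

namespace GeneralLinearGroup

variable {R m n : Type*} [Semiring R] [Fintype m] [Fintype n] [DecidableEq m] [DecidableEq n]

def fromBlocksDiag (A : GL m R) (B : GL n R) : GL (m ⊕ n) R where
  val := fromBlocks A 0 0 B
  inv := fromBlocks ↑A⁻¹ 0 0 ↑B⁻¹
  val_inv := by simp [fromBlocks_multiply]
  inv_val := by simp [fromBlocks_multiply]

theorem fromBlocksDiag_mul_fromBlocks_zero_mul_inv (A : GL m R) (B : GL n R)
    (X : Matrix m n R) :
    (fromBlocksDiag A B : Matrix (m ⊕ n) (m ⊕ n) R) * fromBlocks 0 X 0 0 *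
        (((fromBlocksDiag A B)⁻¹ : GL (m ⊕ n) R) : Matrix (m ⊕ n) (m ⊕ n) R) =
      fromBlocks 0 ((A : Matrix m m R) * X * ((B⁻¹ : GL n R) : Matrix n n R)) 0 0 := by
  simp [fromBlocksDiag, fromBlocks_multiply]

end GeneralLinearGroup

end Matrix

theorem blockNilpotent_conjugate_iff_rank_eq_general (ℓ k : ℕ)
    (X Y : Matrix (Fin ℓ) (Fin k) ℂ) :
    (∃ P : GL (Fin ℓ ⊕ Fin k) ℂ,
      Matrix.fromBlocks 0 Y 0 0 =
        (P : Matrix (Fin ℓ ⊕ Fin k) (Fin ℓ ⊕ Fin k) ℂ) * Matrix.fromBlocks 0 X 0 0 *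
          ((P⁻¹ : GL (Fin ℓ ⊕ Fin k) ℂ) : Matrix (Fin ℓ ⊕ Fin k) (Fin ℓ ⊕ Fin k) ℂ)) ↔
    X.rank = Y.rank := by
  constructor
  · rintro ⟨P, hP⟩
    rw [← rank_fromBlocks_zero₁₁_zero₂₁_zero₂₂ X, ← rank_fromBlocks_zero₁₁_zero₂₁_zero₂₂ Y, hP,
      rank_mul_mul_of_isUnit P.isUnit P⁻¹.isUnit]
  · intro h
    obtain ⟨A, B, rfl⟩ := exists_mul_mul_eq_of_rank_eq h
    refine ⟨GeneralLinearGroup.fromBlocksDiag A B⁻¹, ?_⟩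
    rw [GeneralLinearGroup.fromBlocksDiag_mul_fromBlocks_zero_mul_inv, inv_inv]

/-- Let `n = ℓ + k` and, for an `ℓ × k` complex matrix `X`, let `N_X` be the `n × n` block
matrix `(0 X; 0 0)` (rows and columns indexed by `Fin ℓ ⊕ Fin k`). Then `N_X` and `N_Y` are
conjugate in `GL(n, ℂ)` if and only if `rank X = rank Y`. -/
theorem blockNilpotent_conjugate_iff_rank_eq (ℓ k : ℕ) (hℓ : 0 < ℓ) (hk : 0 < k)
    (X Y : Matrix (Fin ℓ) (Fin k) ℂ) :
    (∃ P : GL (Fin ℓ ⊕ Fin k) ℂ,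
      Matrix.fromBlocks 0 Y 0 0 =
        (P : Matrix (Fin ℓ ⊕ Fin k) (Fin ℓ ⊕ Fin k) ℂ) * Matrix.fromBlocks 0 X 0 0 *
          ((P⁻¹ : GL (Fin ℓ ⊕ Fin k) ℂ) : Matrix (Fin ℓ ⊕ Fin k) (Fin ℓ ⊕ Fin k) ℂ)) ↔
    X.rank = Y.rank :=
  blockNilpotent_conjugate_iff_rank_eq_general ℓ k X Y
end

section
/- Let n be a positive integer, 1 ≤ i ≤ n, and let X_i be the n×n complex matrix given in block form (with blocks of sizes i and n−i) as (1_i 0; 0 0), where 1_i is the i×i identity. An invertible matrix M ∈ GL(n,ℂ) satisfies M * X_i * Mᵀ = X_i if and only if M has block form (A C; 0 B) with A an i×i matrix satisfying A * Aᵀ = 1_i (i.e. A is complex orthogonal), B an invertible (n−i)×(n−i) matrix, and C an arbitrary i×(n−i) matrix. -/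
/-!
Writing `M = (A C; D B)`, the congruence `M X Mᵀ` equals `(A Aᵀ  A Dᵀ; D Aᵀ  D Dᵀ)`.
`A Aᵀ = 1` makes `A` invertible, so `D Aᵀ = 0` forces `D = 0`, after which every block matches;
invertibility of `B` then comes from `det M = det A * det B`.
-/

open Matrix

namespace Matrix

variable {m n R : Type*} [Fintype m] [DecidableEq m] [CommRing R]

theorem eq_zero_of_mul_transpose_eq_zero {A : Matrix m m R} {D : Matrix n m R}
    (hA : A * Aᵀ = 1) (hDA : D * Aᵀ = 0) : D = 0 := by
  calc D = D * Aᵀ * A := by rw [Matrix.mul_assoc, mul_eq_one_comm.mp hA, Matrix.mul_one]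
    _ = 0 := by rw [hDA, Matrix.zero_mul]

theorem fromBlocks_mul_fromBlocks_one_zero_mul_transpose [Fintype n] (A : Matrix m m R)
    (C : Matrix m n R) (D : Matrix n m R) (B : Matrix n n R) :
    fromBlocks A C D B * fromBlocks (1 : Matrix m m R) 0 0 (0 : Matrix n n R) *
        (fromBlocks A C D B)ᵀ =
      fromBlocks (A * Aᵀ) (A * Dᵀ) (D * Aᵀ) (D * Dᵀ) := by
  simp only [fromBlocks_transpose, fromBlocks_multiply, Matrix.mul_one, Matrix.mul_zero,
    Matrix.zero_mul, add_zero]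

theorem fromBlocks_congr_fromBlocks_one_zero_eq_iff [Fintype n] (A : Matrix m m R)
    (C : Matrix m n R) (D : Matrix n m R) (B : Matrix n n R) :
    fromBlocks A C D B * fromBlocks (1 : Matrix m m R) 0 0 (0 : Matrix n n R) *
        (fromBlocks A C D B)ᵀ = fromBlocks (1 : Matrix m m R) 0 0 (0 : Matrix n n R) ↔
      A * Aᵀ = 1 ∧ D = 0 := by
  rw [fromBlocks_mul_fromBlocks_one_zero_mul_transpose, fromBlocks_inj]
  constructor
  · rintro ⟨hA, -, hDA, -⟩
    exact ⟨hA, eq_zero_of_mul_transpose_eq_zero hA hDA⟩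
  · rintro ⟨hA, rfl⟩
    simp [hA]

theorem isUnit_of_isUnit_fromBlocks_zero₂₁ [Fintype n] [DecidableEq n]
    {A : Matrix m m R} {C : Matrix m n R} {B : Matrix n n R} (h : IsUnit (fromBlocks A C 0 B)) :
    IsUnit B := by
  rw [isUnit_iff_isUnit_det, det_fromBlocks_zero₂₁] at h
  exact (isUnit_iff_isUnit_det B).mpr (isUnit_of_mul_isUnit_right h)

end Matrix

theorem stabilizer_symm_rank_i_iff_block_form_general (n i : ℕ)
    (M : GL (Fin i ⊕ Fin (n - i)) ℂ) :
    (M : Matrix (Fin i ⊕ Fin (n - i)) (Fin i ⊕ Fin (n - i)) ℂ) *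
        Matrix.fromBlocks (1 : Matrix (Fin i) (Fin i) ℂ) 0 0
          (0 : Matrix (Fin (n - i)) (Fin (n - i)) ℂ) *
        (M : Matrix (Fin i ⊕ Fin (n - i)) (Fin i ⊕ Fin (n - i)) ℂ)ᵀ =
      Matrix.fromBlocks (1 : Matrix (Fin i) (Fin i) ℂ) 0 0
        (0 : Matrix (Fin (n - i)) (Fin (n - i)) ℂ) ↔
    ∃ (A : Matrix (Fin i) (Fin i) ℂ) (B : Matrix (Fin (n - i)) (Fin (n - i)) ℂ)
      (C : Matrix (Fin i) (Fin (n - i)) ℂ),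
      A * Aᵀ = 1 ∧ IsUnit B ∧
        (M : Matrix (Fin i ⊕ Fin (n - i)) (Fin i ⊕ Fin (n - i)) ℂ) =
          Matrix.fromBlocks A C 0 B := by
  have hM := M.isUnit
  set N : Matrix (Fin i ⊕ Fin (n - i)) (Fin i ⊕ Fin (n - i)) ℂ := ↑M
  obtain ⟨A, C, D, B, hblocks⟩ : ∃ A C D B, N = fromBlocks A C D B :=
    ⟨_, _, _, _, (fromBlocks_toBlocks N).symm⟩
  rw [hblocks] at hM ⊢
  rw [fromBlocks_congr_fromBlocks_one_zero_eq_iff]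
  constructor
  · rintro ⟨hA, rfl⟩
    exact ⟨A, B, C, hA, isUnit_of_isUnit_fromBlocks_zero₂₁ hM, rfl⟩
  · rintro ⟨A', B', C', hA', -, hblk⟩
    obtain ⟨rfl, -, rfl, -⟩ := fromBlocks_inj.mp hblk
    exact ⟨hA', rfl⟩

/-- Let `1 ≤ i ≤ n` and let `X_i` be the `n × n` complex matrix in block form
`(1_i 0; 0 0)` with blocks of sizes `i` and `n - i` (index type `Fin i ⊕ Fin (n - i)`).
An invertible matrix `M ∈ GL(n, ℂ)` satisfies `M * X_i * Mᵀ = X_i` if and only if `M` has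
block form `(A C; 0 B)` with `A * Aᵀ = 1_i` (i.e. `A` complex orthogonal), `B` an invertible
`(n-i) × (n-i)` matrix, and `C` an arbitrary `i × (n-i)` matrix. -/
theorem stabilizer_symm_rank_i_iff_block_form (n i : ℕ) (hi1 : 1 ≤ i) (hin : i ≤ n)
    (M : GL (Fin i ⊕ Fin (n - i)) ℂ) :
    (M : Matrix (Fin i ⊕ Fin (n - i)) (Fin i ⊕ Fin (n - i)) ℂ) *
        Matrix.fromBlocks (1 : Matrix (Fin i) (Fin i) ℂ) 0 0
          (0 : Matrix (Fin (n - i)) (Fin (n - i)) ℂ) *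
        (M : Matrix (Fin i ⊕ Fin (n - i)) (Fin i ⊕ Fin (n - i)) ℂ)ᵀ =
      Matrix.fromBlocks (1 : Matrix (Fin i) (Fin i) ℂ) 0 0
        (0 : Matrix (Fin (n - i)) (Fin (n - i)) ℂ) ↔
    ∃ (A : Matrix (Fin i) (Fin i) ℂ) (B : Matrix (Fin (n - i)) (Fin (n - i)) ℂ)
      (C : Matrix (Fin i) (Fin (n - i)) ℂ),
      A * Aᵀ = 1 ∧ IsUnit B ∧
        (M : Matrix (Fin i ⊕ Fin (n - i)) (Fin i ⊕ Fin (n - i)) ℂ) =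
          Matrix.fromBlocks A C 0 B :=
  stabilizer_symm_rank_i_iff_block_form_general n i M
end

section
/- Let n and i be positive integers with 2i ≤ n, let J = J_{2i} be the standard invertible skew-symmetric 2i×2i matrix (0 1_i; −1_i 0), and let X be the n×n block matrix (J 0; 0 0) with blocks of sizes 2i and n−2i. An invertible matrix M ∈ GL(n,ℂ) satisfies M * X * Mᵀ = X if and only if M has block form (A C; 0 B) with A a 2i×2i matrix satisfying A * J * Aᵀ = J (i.e. A is in the symplectic group Sp(2i,ℂ)), B an invertible (n−2i)×(n−2i) matrix, and C an arbitrary 2i×(n−2i) matrix. -/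
open Matrix

/-- The standard invertible skew-symmetric `2i × 2i` complex matrix
`J_{2i} = (0 1_i; -1_i 0)`, realised on `Fin (2 * i)` via the canonical equivalence
`Fin i ⊕ Fin i ≃ Fin (2 * i)`. -/
noncomputable def Jstd (i : ℕ) : Matrix (Fin (2 * i)) (Fin (2 * i)) ℂ :=
  Matrix.reindex (finSumFinEquiv.trans (finCongr (two_mul i).symm))
    (finSumFinEquiv.trans (finCongr (two_mul i).symm))
    (Matrix.fromBlocks 0 (1 : Matrix (Fin i) (Fin i) ℂ)
      (-1 : Matrix (Fin i) (Fin i) ℂ) 0)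

/-!
Write `M = (A C; D B)`. Then `M (J ⊕ 0) Mᵀ = (AJAᵀ AJDᵀ; DJAᵀ DJDᵀ)`. If this equals `J ⊕ 0` with `J`
invertible, then `AJAᵀ = J` makes `A` invertible, so `AJDᵀ = 0` forces `D = 0`; `M` is then block
upper triangular, and its invertibility makes `B` invertible.
-/

namespace Matrix

variable {m n k α : Type*} [Fintype m] [Fintype n] [CommRing α]

theorem fromBlocks_mul_fromBlocks_zero_mul_transpose (A : Matrix m m α) (C : Matrix m n α)
    (D : Matrix n m α) (B : Matrix n n α) (J : Matrix m m α) :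
    fromBlocks A C D B * fromBlocks J 0 0 (0 : Matrix n n α) * (fromBlocks A C D B)ᵀ =
      fromBlocks (A * J * Aᵀ) (A * J * Dᵀ) (D * J * Aᵀ) (D * J * Dᵀ) := by
  simp only [fromBlocks_transpose, fromBlocks_multiply, Matrix.mul_zero, Matrix.zero_mul,
    add_zero]

variable [DecidableEq m]

theorem isUnit_of_mul_mul_transpose_eq {A J : Matrix m m α} (hJ : IsUnit J)
    (h : A * J * Aᵀ = J) : IsUnit A := by
  rw [isUnit_iff_isUnit_det] at hJ ⊢
  rw [← h, det_mul, det_mul] at hJ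
  exact isUnit_of_mul_isUnit_left (isUnit_of_mul_isUnit_left hJ)

theorem eq_zero_of_isUnit_of_mul_eq_zero {U : Matrix m m α} {X : Matrix m k α} (hU : IsUnit U)
    (h : U * X = 0) : X = 0 := by
  rw [← nonsing_inv_mul_cancel_left U X ((isUnit_iff_isUnit_det U).mp hU), h, Matrix.mul_zero]

variable [DecidableEq n]

theorem mul_fromBlocks_zero_mul_transpose_eq_iff {J : Matrix m m α} (hJ : IsUnit J)
    {M : Matrix (m ⊕ n) (m ⊕ n) α} (hM : IsUnit M) :
    M * fromBlocks J 0 0 (0 : Matrix n n α) * Mᵀ = fromBlocks J 0 0 0 ↔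
      ∃ (A : Matrix m m α) (B : Matrix n n α) (C : Matrix m n α),
        A * J * Aᵀ = J ∧ IsUnit B ∧ M = fromBlocks A C 0 B := by
  constructor
  · intro h
    rw [← fromBlocks_toBlocks M, fromBlocks_mul_fromBlocks_zero_mul_transpose] at h
    obtain ⟨hA, hAD, -, -⟩ := fromBlocks_inj.mp h
    have hD : M.toBlocks₂₁ = 0 := by
      have hAJ : IsUnit (M.toBlocks₁₁ * J) := (isUnit_of_mul_mul_transpose_eq hJ hA).mul hJ
      simpa using congrArg transpose (eq_zero_of_isUnit_of_mul_eq_zero hAJ hAD)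
    rw [← fromBlocks_toBlocks M, hD, isUnit_fromBlocks_zero₂₁] at hM
    exact ⟨_, _, _, hA, hM.2, by rw [← hD, fromBlocks_toBlocks]⟩
  · rintro ⟨A, B, C, hA, -, rfl⟩
    rw [fromBlocks_mul_fromBlocks_zero_mul_transpose, hA]
    simp

end Matrix

theorem Jstd_mul_transpose (i : ℕ) : Jstd i * (Jstd i)ᵀ = 1 := by
  rw [Jstd, transpose_reindex, reindex_apply, reindex_apply, submatrix_mul_equiv,
    fromBlocks_transpose, fromBlocks_multiply]
  simpa using submatrix_one_equiv ((finCongr (two_mul i)).trans finSumFinEquiv.symm)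

theorem isUnit_Jstd (i : ℕ) : IsUnit (Jstd i) :=
  IsUnit.of_mul_eq_one _ (Jstd_mul_transpose i)

theorem stabilizer_skew_rank_2i_iff_block_form_general (n i : ℕ)
    (M : GL (Fin (2 * i) ⊕ Fin (n - 2 * i)) ℂ) :
    (M : Matrix (Fin (2 * i) ⊕ Fin (n - 2 * i)) (Fin (2 * i) ⊕ Fin (n - 2 * i)) ℂ) *
        Matrix.fromBlocks (Jstd i) 0 0
          (0 : Matrix (Fin (n - 2 * i)) (Fin (n - 2 * i)) ℂ) *
        (M : Matrix (Fin (2 * i) ⊕ Fin (n - 2 * i)) (Fin (2 * i) ⊕ Fin (n - 2 * i)) ℂ)ᵀ =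
      Matrix.fromBlocks (Jstd i) 0 0
        (0 : Matrix (Fin (n - 2 * i)) (Fin (n - 2 * i)) ℂ) ↔
    ∃ (A : Matrix (Fin (2 * i)) (Fin (2 * i)) ℂ)
      (B : Matrix (Fin (n - 2 * i)) (Fin (n - 2 * i)) ℂ)
      (C : Matrix (Fin (2 * i)) (Fin (n - 2 * i)) ℂ),
      A * Jstd i * Aᵀ = Jstd i ∧ IsUnit B ∧
        (M : Matrix (Fin (2 * i) ⊕ Fin (n - 2 * i)) (Fin (2 * i) ⊕ Fin (n - 2 * i)) ℂ) =
          Matrix.fromBlocks A C 0 B :=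
  mul_fromBlocks_zero_mul_transpose_eq_iff (isUnit_Jstd i) M.isUnit

/-- Let `1 ≤ i` with `2i ≤ n` and let `X` be the `n × n` block matrix `(J_{2i} 0; 0 0)` with
blocks of sizes `2i` and `n - 2i` (index type `Fin (2i) ⊕ Fin (n - 2i)`). An invertible
matrix `M ∈ GL(n, ℂ)` satisfies `M * X * Mᵀ = X` if and only if `M` has block form
`(A C; 0 B)` with `A * J_{2i} * Aᵀ = J_{2i}` (i.e. `A ∈ Sp(2i, ℂ)`), `B` an invertible
`(n - 2i) × (n - 2i)` matrix, and `C` an arbitrary `2i × (n - 2i)` matrix. -/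
theorem stabilizer_skew_rank_2i_iff_block_form (n i : ℕ) (hi1 : 1 ≤ i) (hin : 2 * i ≤ n)
    (M : GL (Fin (2 * i) ⊕ Fin (n - 2 * i)) ℂ) :
    (M : Matrix (Fin (2 * i) ⊕ Fin (n - 2 * i)) (Fin (2 * i) ⊕ Fin (n - 2 * i)) ℂ) *
        Matrix.fromBlocks (Jstd i) 0 0
          (0 : Matrix (Fin (n - 2 * i)) (Fin (n - 2 * i)) ℂ) *
        (M : Matrix (Fin (2 * i) ⊕ Fin (n - 2 * i)) (Fin (2 * i) ⊕ Fin (n - 2 * i)) ℂ)ᵀ =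
      Matrix.fromBlocks (Jstd i) 0 0
        (0 : Matrix (Fin (n - 2 * i)) (Fin (n - 2 * i)) ℂ) ↔
    ∃ (A : Matrix (Fin (2 * i)) (Fin (2 * i)) ℂ)
      (B : Matrix (Fin (n - 2 * i)) (Fin (n - 2 * i)) ℂ)
      (C : Matrix (Fin (2 * i)) (Fin (n - 2 * i)) ℂ),
      A * Jstd i * Aᵀ = Jstd i ∧ IsUnit B ∧
        (M : Matrix (Fin (2 * i) ⊕ Fin (n - 2 * i)) (Fin (2 * i) ⊕ Fin (n - 2 * i)) ℂ) =
          Matrix.fromBlocks A C 0 B :=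
  stabilizer_skew_rank_2i_iff_block_form_general n i M
end

section
/- Let n be a positive integer and let i be a natural number with i ≤ n. In the space of symmetric n×n complex matrices (a closed subspace of all n×n matrices with the standard topology), the topological closure of the set {X : Xᵀ = X and rank X = i} equals the set {X : Xᵀ = X and rank X ≤ i}. -/
/-!
A complex symmetric matrix is congruent to a diagonal one, `X = Qᵀ D Q` with `Q` invertible, and
congruence preserves both symmetry and rank. Perturbing `i - rank X` zero diagonal entries of `D`
to a small `ε ≠ 0` gives symmetric matrices of rank exactly `i` converging to `X`. Conversely,
rank is lower semicontinuous, so the rank-`≤ i` symmetric matrices form a closed set.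
-/

open Matrix Filter Topology Finset

namespace Matrix

section Closed

variable {𝕜 m n : Type*} [NontriviallyNormedField 𝕜] [CompleteSpace 𝕜] [Fintype m] [Fintype n]

theorem isClosed_setOf_rank_le (k : ℕ) : IsClosed {A : Matrix m n 𝕜 | A.rank ≤ k} := by
  classical
  let toCLM : Matrix m n 𝕜 →ₗ[𝕜] (n → 𝕜) →L[𝕜] (m → 𝕜) :=
    LinearMap.toContinuousLinearMap.toLinearMap ∘ₗ Matrix.toLin'.toLinearMap
  have hrank (A : Matrix m n 𝕜) :
      (toCLM A : (n → 𝕜) →ₗ[𝕜] (m → 𝕜)).rank = A.rank := by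
    rw [Matrix.rank, Module.finrank_eq_rank]; rfl
  rw [← isOpen_compl_iff]
  convert (isOpen_setOfPred_nat_le_rank (k + 1)).preimage toCLM.continuous_of_finiteDimensional
  ext A
  rw [Set.mem_preimage, Set.mem_ofPred_eq, hrank, Nat.cast_le, Set.mem_compl_iff,
    Set.mem_ofPred_eq, not_le]
  rfl

end Closed

variable {n : Type*} [Fintype n] [DecidableEq n]

theorem rank_transpose_mul_mul_of_isUnit {R : Type*} [CommRing R] {Q : Matrix n n R}
    (hQ : IsUnit Q) (A : Matrix n n R) : (Qᵀ * A * Q).rank = A.rank := by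
  rw [isUnit_iff_isUnit_det] at hQ
  rw [rank_mul_eq_left_of_isUnit_det Q _ hQ,
    rank_mul_eq_right_of_isUnit_det _ A (by rwa [det_transpose])]

theorem IsSymm.exists_eq_transpose_mul_diagonal_mul {K : Type*} [Field K] [Invertible (2 : K)]
    {A : Matrix n n K} (hA : A.IsSymm) :
    ∃ (Q : Matrix n n K) (d : n → K), IsUnit Q ∧ A = Qᵀ * diagonal d * Q := by
  obtain ⟨v, hv⟩ := LinearMap.BilinForm.exists_orthogonal_basis
    (LinearMap.BilinForm.isSymm_iff.mp (isSymm_toBilin'_iff_isSymm.mpr hA))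
  let w : Module.Basis n K (n → K) := v.reindex (Fintype.equivOfCardEq (by simp))
  let P := (Pi.basisFun K n).toMatrix w
  have hdiag : Pᵀ * A * P = diagonal fun i => A.toBilin' (w i) (w i) := by
    have := LinearMap.BilinForm.toMatrix_mul_basis_toMatrix (Pi.basisFun K n) w A.toBilin'
    rw [LinearMap.BilinForm.toMatrix_basisFun, LinearMap.BilinForm.toMatrix'_toBilin'] at this
    rw [this]
    ext i j
    rcases eq_or_ne i j with rfl | hij
    · simp [LinearMap.BilinForm.toMatrix_apply]
    · rw [LinearMap.BilinForm.toMatrix_apply, diagonal_apply_ne _ hij]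
      simpa [w] using hv (by simpa using hij)
  have : Invertible P := (Pi.basisFun K n).invertibleToMatrix w
  refine ⟨P⁻¹, fun i => A.toBilin' (w i) (w i), isUnit_of_invertible _, ?_⟩
  rw [← hdiag, transpose_nonsing_inv]
  simp only [Matrix.mul_assoc, Matrix.mul_inv_of_invertible, Matrix.mul_one,
    inv_mul_cancel_left_of_invertible]

theorem mem_closure_setOf_rank_diagonal_eq {𝕜 : Type*} [NontriviallyNormedField 𝕜] {k : ℕ}
    (d : n → 𝕜) (hd : (diagonal d).rank ≤ k) (hk : k ≤ Fintype.card n) :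
    d ∈ closure {e : n → 𝕜 | (diagonal e).rank = k} := by
  classical
  simp only [rank_diagonal, Fintype.card_subtype] at hd ⊢
  obtain ⟨S, hS, hScard⟩ := exists_subset_card_eq
    (s := univ.filter (d · = 0)) (n := k - #(univ.filter (d · ≠ 0))) (by
      have := card_filter_add_card_filter_not (s := univ) (fun j => d j ≠ 0)
      simp only [card_univ, not_not] at this
      omega)
  let e : 𝕜 → n → 𝕜 := fun ε => d + ε • fun j => if j ∈ S then 1 else 0
  have he : Tendsto e (𝓝[≠] 0) (𝓝 d) :=
    ((continuous_const.add (continuous_id.smul continuous_const)).tendsto' 0 d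
      (by simp)).mono_left nhdsWithin_le_nhds
  refine mem_closure_of_tendsto he (eventually_nhdsWithin_of_forall fun ε hε => ?_)
  have hsupp : univ.filter (e ε · ≠ 0) = univ.filter (d · ≠ 0) ∪ S := by
    ext j
    by_cases hj : j ∈ S
    · simpa [e, hj, (mem_filter.mp (hS hj)).2] using hε
    · simp [e, hj]
  have hdisj : Disjoint (univ.filter (d · ≠ 0)) S :=
    disjoint_left.mpr fun j hj hjS => (mem_filter.mp hj).2 (mem_filter.mp (hS hjS)).2
  rw [Set.mem_ofPred_eq, hsupp, card_union_of_disjoint hdisj, hScard]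
  omega

end Matrix

theorem closure_symm_rank_eq_eq_symm_rank_le_general (n i : ℕ) (hi : i ≤ n) :
    closure {X : Matrix (Fin n) (Fin n) ℂ | Xᵀ = X ∧ X.rank = i} =
      {X : Matrix (Fin n) (Fin n) ℂ | Xᵀ = X ∧ X.rank ≤ i} := by
  refine subset_antisymm (closure_minimal (fun X hX => ⟨hX.1, hX.2.le⟩) ?_) ?_
  · exact (isClosed_eq continuous_id.matrix_transpose continuous_id).inter
      (isClosed_setOf_rank_le i)
  rintro X ⟨hX, hXi⟩
  obtain ⟨Q, d, hQ, rfl⟩ := IsSymm.exists_eq_transpose_mul_diagonal_mul hX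
  rw [rank_transpose_mul_mul_of_isUnit hQ] at hXi
  have hcont : Continuous fun e : Fin n → ℂ => Qᵀ * diagonal e * Q := by fun_prop
  refine map_mem_closure (f := fun e => Qᵀ * diagonal e * Q) hcont (mem_closure_setOf_rank_diagonal_eq d hXi (by simpa using hi))
    fun e he => ⟨?_, (rank_transpose_mul_mul_of_isUnit hQ _).trans he⟩
  simp [Matrix.mul_assoc]

/-- In the space of symmetric `n × n` complex matrices (a closed subspace of all `n × n`
matrices with the standard topology), for `i ≤ n`, the topological closure of the set of
symmetric matrices of rank exactly `i` equals the set of symmetric matrices of rank at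
most `i`. -/
theorem closure_symm_rank_eq_eq_symm_rank_le (n i : ℕ) (hn : 0 < n) (hi : i ≤ n) :
    closure {X : Matrix (Fin n) (Fin n) ℂ | Xᵀ = X ∧ X.rank = i} =
      {X : Matrix (Fin n) (Fin n) ℂ | Xᵀ = X ∧ X.rank ≤ i} :=
  closure_symm_rank_eq_eq_symm_rank_le_general n i hi
end
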